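/- arXiv:1710.11119 — 4 statements merged into one kernel-verified Lean document; each statement's English description precedes it below -/
import Mathlib

section
/- For any probability measure μ on a measurable space Λ and measurable random variables A₀, A₁, B₀, B₁ : Λ → ℝ with values in [-1,1], the expectation |∫ (A₀B₀ + A₀B₁ + A₁B₀ − A₁B₁) dμ| ≤ 2. -/
open MeasureTheory

theorem chsh_random_variables {Λ : Type*} [MeasurableSpace Λ]
    (μ : Measure Λ) [IsProbabilityMeasure μ]
    (A₀ A₁ B₀ B₁ : Λ → ℝ)
    (hA₀m : Measurable A₀) (hA₁m : Measurable A₁)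
    (hB₀m : Measurable B₀) (hB₁m : Measurable B₁)
    (hA₀ : ∀ l, |A₀ l| ≤ 1) (hA₁ : ∀ l, |A₁ l| ≤ 1)
    (hB₀ : ∀ l, |B₀ l| ≤ 1) (hB₁ : ∀ l, |B₁ l| ≤ 1) :
    |∫ l, (A₀ l * B₀ l + A₀ l * B₁ l + A₁ l * B₀ l - A₁ l * B₁ l) ∂μ| ≤ 2 := by
  have h := norm_integral_le_of_norm_le_const (μ := μ) (C := 2)
    (f := fun l => A₀ l * B₀ l + A₀ l * B₁ l + A₁ l * B₀ l - A₁ l * B₁ l) ?_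
  · simpa using h
  · filter_upwards with l
    have h0 := hA₀ l; have h1 := hA₁ l; have h2 := hB₀ l; have h3 := hB₁ l
    rw [Real.norm_eq_abs] at *
    have e : A₀ l * B₀ l + A₀ l * B₁ l + A₁ l * B₀ l - A₁ l * B₁ l
        = A₀ l * (B₀ l + B₁ l) + A₁ l * (B₀ l - B₁ l) := by ring
    rw [e]
    calc |A₀ l * (B₀ l + B₁ l) + A₁ l * (B₀ l - B₁ l)|
        ≤ |A₀ l * (B₀ l + B₁ l)| + |A₁ l * (B₀ l - B₁ l)| := abs_add_le _ _
      _ ≤ |B₀ l + B₁ l| + |B₀ l - B₁ l| := by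
          rw [abs_mul, abs_mul]
          have := mul_le_of_le_one_left (abs_nonneg (B₀ l + B₁ l)) h0
          have := mul_le_of_le_one_left (abs_nonneg (B₀ l - B₁ l)) h1
          linarith
      _ ≤ 2 := by
          rcases abs_cases (B₀ l) with ⟨_,_⟩ <;> rcases abs_cases (B₁ l) with ⟨_,_⟩ <;>
          rcases abs_cases (B₀ l + B₁ l) with ⟨h4,_⟩ <;>
          rcases abs_cases (B₀ l - B₁ l) with ⟨h5,_⟩ <;> linarith
end

section
/- For a finite index set Λ with a probability weight function p : Λ → [0,1] summing to 1, and functions a₀, a₁, b₀, b₁ : Λ → [-1,1], the weighted sum |Σ_λ p(λ)·(a₀(λ)b₀(λ) + a₀(λ)b₁(λ) + a₁(λ)b₀(λ) − a₁(λ)b₁(λ))| ≤ 2. -/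
lemma chsh_pt (a b c d : ℝ) (ha : a ∈ Set.Icc (-1:ℝ) 1) (hb : b ∈ Set.Icc (-1:ℝ) 1)
    (hc : c ∈ Set.Icc (-1:ℝ) 1) (hd : d ∈ Set.Icc (-1:ℝ) 1) :
    |a * c + a * d + b * c - b * d| ≤ 2 := by
  obtain ⟨ha1, ha2⟩ := ha; obtain ⟨hb1, hb2⟩ := hb
  obtain ⟨hc1, hc2⟩ := hc; obtain ⟨hd1, hd2⟩ := hd
  have key : |a * (c + d)| + |b * (c - d)| ≤ 2 := by
    rw [abs_mul, abs_mul]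
    have h1 : |a| * |c + d| ≤ |c + d| := by
      apply mul_le_of_le_one_left (abs_nonneg _); rw [abs_le]; constructor <;> linarith
    have h2 : |b| * |c - d| ≤ |c - d| := by
      apply mul_le_of_le_one_left (abs_nonneg _); rw [abs_le]; constructor <;> linarith
    have h3 : |c + d| + |c - d| ≤ 2 := by
      rcases abs_cases (c + d) with ⟨e1, _⟩ | ⟨e1, _⟩ <;>
        rcases abs_cases (c - d) with ⟨e2, _⟩ | ⟨e2, _⟩ <;> rw [e1, e2] <;> linarith
    linarith
  calc |a * c + a * d + b * c - b * d| = |a * (c + d) + b * (c - d)| := by ring_nf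
    _ ≤ |a * (c + d)| + |b * (c - d)| := abs_add_le _ _
    _ ≤ 2 := key

theorem chsh_discrete {Λ : Type*} [Fintype Λ]
    (p : Λ → ℝ) (hp : ∀ l, 0 ≤ p l) (hp1 : ∑ l, p l = 1)
    (a₀ a₁ b₀ b₁ : Λ → ℝ)
    (ha₀ : ∀ l, a₀ l ∈ Set.Icc (-1 : ℝ) 1) (ha₁ : ∀ l, a₁ l ∈ Set.Icc (-1 : ℝ) 1)
    (hb₀ : ∀ l, b₀ l ∈ Set.Icc (-1 : ℝ) 1) (hb₁ : ∀ l, b₁ l ∈ Set.Icc (-1 : ℝ) 1) :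
    |∑ l, p l * (a₀ l * b₀ l + a₀ l * b₁ l + a₁ l * b₀ l - a₁ l * b₁ l)| ≤ 2 := by
  calc |∑ l, p l * (a₀ l * b₀ l + a₀ l * b₁ l + a₁ l * b₀ l - a₁ l * b₁ l)|
      ≤ ∑ l, |p l * (a₀ l * b₀ l + a₀ l * b₁ l + a₁ l * b₀ l - a₁ l * b₁ l)| :=
        Finset.abs_sum_le_sum_abs _ _
    _ ≤ ∑ l, p l * 2 := by
        apply Finset.sum_le_sum
        intro l _
        rw [abs_mul, abs_of_nonneg (hp l)]
        exact mul_le_mul_of_nonneg_left (chsh_pt _ _ _ _ (ha₀ l) (ha₁ l) (hb₀ l) (hb₁ l)) (hp l)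
    _ = 2 := by rw [← Finset.sum_mul, hp1, one_mul]
end

section
/- Let q : ({-1,1} × {-1,1}) × ({0,1} × {0,1}) → ℝ be a family of conditional probability distributions (q(·,·|a,b) nonnegative, summing to 1 for each (a,b)). Suppose q factorizes locally over a finite hidden variable: there exist a finite type Λ, weights p : Λ → ℝ (nonnegative, summing to 1), and functions qᴬ : {-1,1} → {0,1} → Λ → ℝ, qᴮ : {-1,1} → {0,1} → Λ → ℝ (each a probability distribution over the output for every fixed input and λ) with q(A,B|a,b) = Σ_λ p(λ)·qᴬ(A,a,λ)·qᴮ(B,b,λ). Then the CHSH value ⟨AB⟩₀₀ + ⟨AB⟩₀₁ + ⟨AB⟩₁₀ − ⟨AB⟩₁₁, where ⟨AB⟩_{ab} = Σ_{A,B} A·B·q(A,B|a,b), satisfies |CHSH| ≤ 2. -/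
theorem bell_theorem_fpsm
    (q : ℝ → ℝ → ℝ → ℝ → ℝ)
    (Λ : Type) [Fintype Λ]
    (p : Λ → ℝ) (hp : ∀ l, 0 ≤ p l) (hp1 : ∑ l, p l = 1)
    (qA qB : ℝ → ℝ → Λ → ℝ)
    (hqA0 : ∀ A ∈ ({-1, 1} : Set ℝ), ∀ a ∈ ({0, 1} : Set ℝ), ∀ l, 0 ≤ qA A a l)
    (hqA1 : ∀ a ∈ ({0, 1} : Set ℝ), ∀ l, qA (-1) a l + qA 1 a l = 1)
    (hqB0 : ∀ B ∈ ({-1, 1} : Set ℝ), ∀ b ∈ ({0, 1} : Set ℝ), ∀ l, 0 ≤ qB B b l)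
    (hqB1 : ∀ b ∈ ({0, 1} : Set ℝ), ∀ l, qB (-1) b l + qB 1 b l = 1)
    (hfact : ∀ A ∈ ({-1, 1} : Set ℝ), ∀ B ∈ ({-1, 1} : Set ℝ),
      ∀ a ∈ ({0, 1} : Set ℝ), ∀ b ∈ ({0, 1} : Set ℝ),
      q A B a b = ∑ l, p l * qA A a l * qB B b l)
    (corr : ℝ → ℝ → ℝ)
    (hcorr : ∀ a b : ℝ,
      corr a b = ∑ A ∈ ({-1, 1} : Finset ℝ), ∑ B ∈ ({-1, 1} : Finset ℝ),
        A * B * q A B a b) :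
    |corr 0 0 + corr 0 1 + corr 1 0 - corr 1 1| ≤ 2 := by
  have hm1 : (-1 : ℝ) ∈ ({-1, 1} : Set ℝ) := by left; rfl
  have h1 : (1 : ℝ) ∈ ({-1, 1} : Set ℝ) := by right; rfl
  have h0 : (0 : ℝ) ∈ ({0, 1} : Set ℝ) := by left; rfl
  have h1' : (1 : ℝ) ∈ ({0, 1} : Set ℝ) := by right; rfl
  set EA : ℝ → Λ → ℝ := fun a l => qA 1 a l - qA (-1) a l with hEA
  set EB : ℝ → Λ → ℝ := fun b l => qB 1 b l - qB (-1) b l with hEB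
  have hne : (-1 : ℝ) ≠ 1 := by norm_num
  have hkey : ∀ a ∈ ({0, 1} : Set ℝ), ∀ b ∈ ({0, 1} : Set ℝ),
      corr a b = ∑ l, p l * (EA a l * EB b l) := by
    intro a ha b hb
    rw [hcorr, Finset.sum_pair hne, Finset.sum_pair hne, Finset.sum_pair hne,
        hfact _ hm1 _ hm1 _ ha _ hb, hfact _ hm1 _ h1 _ ha _ hb,
        hfact _ h1 _ hm1 _ ha _ hb, hfact _ h1 _ h1 _ ha _ hb]
    simp only [Finset.mul_sum, ← Finset.sum_add_distrib]
    apply Finset.sum_congr rfl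
    intro l _
    simp only [hEA, hEB]
    ring
  have hEAb : ∀ a ∈ ({0, 1} : Set ℝ), ∀ l, |EA a l| ≤ 1 := by
    intro a ha l
    have := hqA0 _ hm1 _ ha l
    have := hqA0 _ h1 _ ha l
    have := hqA1 _ ha l
    rw [abs_le]; constructor <;> simp only [hEA] <;> linarith
  have hEBb : ∀ b ∈ ({0, 1} : Set ℝ), ∀ l, |EB b l| ≤ 1 := by
    intro b hb l
    have := hqB0 _ hm1 _ hb l
    have := hqB0 _ h1 _ hb l
    have := hqB1 _ hb l
    rw [abs_le]; constructor <;> simp only [hEB] <;> linarith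
  rw [hkey _ h0 _ h0, hkey _ h0 _ h1', hkey _ h1' _ h0, hkey _ h1' _ h1']
  rw [← Finset.sum_add_distrib, ← Finset.sum_add_distrib, ← Finset.sum_sub_distrib]
  calc |∑ l, (p l * (EA 0 l * EB 0 l) + p l * (EA 0 l * EB 1 l) +
        p l * (EA 1 l * EB 0 l) - p l * (EA 1 l * EB 1 l))|
      ≤ ∑ l, |p l * (EA 0 l * EB 0 l) + p l * (EA 0 l * EB 1 l) +
        p l * (EA 1 l * EB 0 l) - p l * (EA 1 l * EB 1 l)| := Finset.abs_sum_le_sum_abs _ _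
    _ ≤ ∑ l, p l * 2 := by
        apply Finset.sum_le_sum
        intro l _
        have hx : p l * (EA 0 l * EB 0 l) + p l * (EA 0 l * EB 1 l) +
            p l * (EA 1 l * EB 0 l) - p l * (EA 1 l * EB 1 l) =
            p l * (EA 0 l * EB 0 l + EA 0 l * EB 1 l + EA 1 l * EB 0 l - EA 1 l * EB 1 l) := by
          ring
        rw [hx, abs_mul, abs_of_nonneg (hp l)]
        apply mul_le_mul_of_nonneg_left _ (hp l)
        have a0 := abs_le.mp (hEAb _ h0 l)
        have a1 := abs_le.mp (hEAb _ h1' l)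
        have b0 := abs_le.mp (hEBb _ h0 l)
        have b1 := abs_le.mp (hEBb _ h1' l)
        set x := EB 0 l + EB 1 l with hxdef
        set y := EB 0 l - EB 1 l with hydef
        have hs : |x| + |y| ≤ 2 := by
          rcases abs_cases x with ⟨h, _⟩ | ⟨h, _⟩ <;>
            rcases abs_cases y with ⟨h', _⟩ | ⟨h', _⟩ <;>
              simp only [hxdef, hydef] at h h' ⊢ <;> linarith [b0.1, b0.2, b1.1, b1.2]
        have m0 : |EA 0 l * x| ≤ |x| := by
          rw [abs_mul]
          exact mul_le_of_le_one_left (abs_nonneg _) (hEAb _ h0 l)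
        have m1 : |EA 1 l * y| ≤ |y| := by
          rw [abs_mul]
          exact mul_le_of_le_one_left (abs_nonneg _) (hEAb _ h1' l)
        have hch : EA 0 l * EB 0 l + EA 0 l * EB 1 l + EA 1 l * EB 0 l - EA 1 l * EB 1 l =
            EA 0 l * x + EA 1 l * y := by simp only [hxdef, hydef]; ring
        rw [hch, abs_le]
        constructor <;>
          linarith [le_abs_self (EA 0 l * x), neg_abs_le (EA 0 l * x),
            le_abs_self (EA 1 l * y), neg_abs_le (EA 1 l * y)]
    _ = 2 := by rw [← Finset.sum_mul, hp1, one_mul]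
end

section
/- The PR-box conditional distribution q(A,B|a,b) = (1/2)·δ_{A,1}δ_{B,1-2ab} + (1/2)·δ_{A,-1}δ_{B,2ab-1} does not admit a local hidden-variable factorization: there exist no finite type Λ, probability weights p : Λ → ℝ, and one-sided conditional distributions qᴬ(A|a,λ), qᴮ(B|b,λ) such that q(A,B|a,b) = Σ_λ p(λ)·qᴬ(A|a,λ)·qᴮ(B|b,λ) for all A, B, a, b. -/
/-- The PR-box conditional distribution. -/
noncomputable def prBox (A B a b : ℝ) : ℝ :=
  (1 / 2) * (if A = 1 then (1 : ℝ) else 0) * (if B = 1 - 2 * a * b then (1 : ℝ) else 0) +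
  (1 / 2) * (if A = -1 then (1 : ℝ) else 0) * (if B = 2 * a * b - 1 then (1 : ℝ) else 0)

lemma chsh_pointwise (x y u v : ℝ) (hx1 : -1 ≤ x) (hx2 : x ≤ 1) (hy1 : -1 ≤ y) (hy2 : y ≤ 1)
    (hu1 : -1 ≤ u) (hu2 : u ≤ 1) (hv1 : -1 ≤ v) (hv2 : v ≤ 1) :
    x * u + x * v + y * u - y * v ≤ 2 := by
  nlinarith [mul_nonneg (by linarith : (0:ℝ) ≤ 1 - x) (by linarith : (0:ℝ) ≤ 1 - u),
    mul_nonneg (by linarith : (0:ℝ) ≤ 1 - x) (by linarith : (0:ℝ) ≤ 1 - v),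
    mul_nonneg (by linarith : (0:ℝ) ≤ 1 + x) (by linarith : (0:ℝ) ≤ 1 + u),
    mul_nonneg (by linarith : (0:ℝ) ≤ 1 + x) (by linarith : (0:ℝ) ≤ 1 + v),
    mul_nonneg (by linarith : (0:ℝ) ≤ 1 - y) (by linarith : (0:ℝ) ≤ 1 + u),
    mul_nonneg (by linarith : (0:ℝ) ≤ 1 - y) (by linarith : (0:ℝ) ≤ 1 - v),
    mul_nonneg (by linarith : (0:ℝ) ≤ 1 + y) (by linarith : (0:ℝ) ≤ 1 - u),
    mul_nonneg (by linarith : (0:ℝ) ≤ 1 + y) (by linarith : (0:ℝ) ≤ 1 + v)]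

theorem prBox_no_local_factorization :
    ¬ ∃ (Λ : Type) (_ : Fintype Λ) (p : Λ → ℝ) (qA qB : ℝ → ℝ → Λ → ℝ),
      (∀ l, 0 ≤ p l) ∧ (∑ l, p l = 1) ∧
      (∀ A ∈ ({-1, 1} : Set ℝ), ∀ a ∈ ({0, 1} : Set ℝ), ∀ l, 0 ≤ qA A a l) ∧
      (∀ a ∈ ({0, 1} : Set ℝ), ∀ l, qA (-1) a l + qA 1 a l = 1) ∧
      (∀ B ∈ ({-1, 1} : Set ℝ), ∀ b ∈ ({0, 1} : Set ℝ), ∀ l, 0 ≤ qB B b l) ∧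
      (∀ b ∈ ({0, 1} : Set ℝ), ∀ l, qB (-1) b l + qB 1 b l = 1) ∧
      (∀ A ∈ ({-1, 1} : Set ℝ), ∀ B ∈ ({-1, 1} : Set ℝ),
        ∀ a ∈ ({0, 1} : Set ℝ), ∀ b ∈ ({0, 1} : Set ℝ),
        prBox A B a b = ∑ l, p l * qA A a l * qB B b l) := by
  rintro ⟨Λ, fΛ, p, qA, qB, hp, hps, hqA0, hqA1, hqB0, hqB1, hfac⟩
  letI : Fintype Λ := fΛ
  have hm1 : (-1 : ℝ) ∈ ({-1, 1} : Set ℝ) := by simp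
  have hp1 : (1 : ℝ) ∈ ({-1, 1} : Set ℝ) := by simp
  have h0 : (0 : ℝ) ∈ ({0, 1} : Set ℝ) := by simp
  have h1 : (1 : ℝ) ∈ ({0, 1} : Set ℝ) := by simp
  -- correlator expansion
  have expand : ∀ a ∈ ({0,1} : Set ℝ), ∀ b ∈ ({0,1} : Set ℝ),
      prBox 1 1 a b - prBox 1 (-1) a b - prBox (-1) 1 a b + prBox (-1) (-1) a b
      = ∑ l, p l * ((qA 1 a l - qA (-1) a l) * (qB 1 b l - qB (-1) b l)) := by
    intro a ha b hb
    rw [hfac 1 hp1 1 hp1 a ha b hb, hfac 1 hp1 (-1) hm1 a ha b hb,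
      hfac (-1) hm1 1 hp1 a ha b hb, hfac (-1) hm1 (-1) hm1 a ha b hb,
      ← Finset.sum_sub_distrib, ← Finset.sum_sub_distrib, ← Finset.sum_add_distrib]
    exact Finset.sum_congr rfl (fun l _ => by ring)
  have e00 := expand 0 h0 0 h0
  have e01 := expand 0 h0 1 h1
  have e10 := expand 1 h1 0 h0
  have e11 := expand 1 h1 1 h1
  -- compute prBox values
  simp only [prBox] at e00 e01 e10 e11
  norm_num at e00 e01 e10 e11
  -- total CHSH value of the model is 4
  have key : ∑ l, p l * ((qA 1 0 l - qA (-1) 0 l) * (qB 1 0 l - qB (-1) 0 l)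
      + (qA 1 0 l - qA (-1) 0 l) * (qB 1 1 l - qB (-1) 1 l)
      + (qA 1 1 l - qA (-1) 1 l) * (qB 1 0 l - qB (-1) 0 l)
      - (qA 1 1 l - qA (-1) 1 l) * (qB 1 1 l - qB (-1) 1 l)) = 4 := by
    have : ∀ l : Λ, p l * ((qA 1 0 l - qA (-1) 0 l) * (qB 1 0 l - qB (-1) 0 l)
        + (qA 1 0 l - qA (-1) 0 l) * (qB 1 1 l - qB (-1) 1 l)
        + (qA 1 1 l - qA (-1) 1 l) * (qB 1 0 l - qB (-1) 0 l)
        - (qA 1 1 l - qA (-1) 1 l) * (qB 1 1 l - qB (-1) 1 l))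
        = p l * ((qA 1 0 l - qA (-1) 0 l) * (qB 1 0 l - qB (-1) 0 l))
        + p l * ((qA 1 0 l - qA (-1) 0 l) * (qB 1 1 l - qB (-1) 1 l))
        + p l * ((qA 1 1 l - qA (-1) 1 l) * (qB 1 0 l - qB (-1) 0 l))
        - p l * ((qA 1 1 l - qA (-1) 1 l) * (qB 1 1 l - qB (-1) 1 l)) := fun l => by ring
    rw [Finset.sum_congr rfl (fun l _ => this l), Finset.sum_sub_distrib,
      Finset.sum_add_distrib, Finset.sum_add_distrib, ← e00, ← e01, ← e10, ← e11]
    linarith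
  -- but it is bounded by 2
  have bound : ∑ l, p l * ((qA 1 0 l - qA (-1) 0 l) * (qB 1 0 l - qB (-1) 0 l)
      + (qA 1 0 l - qA (-1) 0 l) * (qB 1 1 l - qB (-1) 1 l)
      + (qA 1 1 l - qA (-1) 1 l) * (qB 1 0 l - qB (-1) 0 l)
      - (qA 1 1 l - qA (-1) 1 l) * (qB 1 1 l - qB (-1) 1 l)) ≤ 2 := by
    calc _ ≤ ∑ l, p l * 2 := by
          apply Finset.sum_le_sum
          intro l _
          apply mul_le_mul_of_nonneg_left _ (hp l)
          have a00 := hqA0 (-1) hm1 0 h0 l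
          have a01 := hqA0 1 hp1 0 h0 l
          have a10 := hqA0 (-1) hm1 1 h1 l
          have a11 := hqA0 1 hp1 1 h1 l
          have as0 := hqA1 0 h0 l
          have as1 := hqA1 1 h1 l
          have b00 := hqB0 (-1) hm1 0 h0 l
          have b01 := hqB0 1 hp1 0 h0 l
          have b10 := hqB0 (-1) hm1 1 h1 l
          have b11 := hqB0 1 hp1 1 h1 l
          have bs0 := hqB1 0 h0 l
          have bs1 := hqB1 1 h1 l
          have := chsh_pointwise (qA 1 0 l - qA (-1) 0 l) (qA 1 1 l - qA (-1) 1 l)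
            (qB 1 0 l - qB (-1) 0 l) (qB 1 1 l - qB (-1) 1 l)
            (by linarith) (by linarith) (by linarith) (by linarith)
            (by linarith) (by linarith) (by linarith) (by linarith)
          linarith
      _ = 2 := by rw [← Finset.sum_mul, hps, one_mul]
  linarith
end
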